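/- arXiv:1503.08079 — 6 statements merged into one kernel-verified Lean document; each statement's English description precedes it below -/
import Mathlib

section
/- Let G : ℂ² → ℂ be Broughton's example G(z, w) = z + z²w, regarded as a real polynomial map ℂ² ≅ ℝ⁴ → ℝ², and let ρ : ℂ² → ℝ, ρ(z, w) = |w|². Then the Milnor set M_G := { (z, w) ∈ ℂ² : the real Fréchet derivative at (z, w) of the map (G, ρ) : ℂ² → ℂ × ℝ has rank ≤ 2 over ℝ } equals M₁ ∪ M₂, where M₁ = { (z, w) ∈ ℂ² : w = 0 } and M₂ = { (z, w) ∈ ℂ² : 1 + 2zw = 0 }. -/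
/-!
The real derivative of `(G, ρ)` at `(z, w)` is `(ζ, ω) ↦ ((1 + 2zw) ζ + z² ω, 2 ⟪w, ω⟫)`, with
target `ℂ × ℝ` of real dimension 3, so its rank is at most 2 exactly when it fails to be
onto. If `w ≠ 0` and `1 + 2zw ≠ 0` it is onto: choose `ω` along `w` to fix the `ℝ`-component, then
solve for `ζ`. If `w = 0` its image lies in `ℂ × {0}`, and if `1 + 2zw = 0` it factors through
the projection `(ζ, ω) ↦ ω`; in both cases the rank is at most `dim_ℝ ℂ = 2`.
-/

open ContinuousLinearMap

noncomputable def broughtonDeriv (z w : ℂ) : ℂ × ℂ →L[ℝ] ℂ × ℝ :=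
  ((mul ℝ ℂ (1 + 2 * z * w)).comp (fst ℝ ℂ ℂ) + (mul ℝ ℂ (z ^ 2)).comp (snd ℝ ℂ ℂ)).prod
    ((innerSL ℝ ((2 : ℝ) • w)).comp (snd ℝ ℂ ℂ))

@[simp]
lemma broughtonDeriv_apply (z w : ℂ) (v : ℂ × ℂ) :
    broughtonDeriv z w v = ((1 + 2 * z * w) * v.1 + z ^ 2 * v.2, 2 * inner ℝ w v.2) := by
  ext <;> simp [broughtonDeriv] <;> ring

lemma hasFDerivAt_broughton (z w : ℂ) :
    HasFDerivAt (fun q : ℂ × ℂ => (q.1 + q.1 ^ 2 * q.2, ‖q.2‖ ^ 2)) (broughtonDeriv z w)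
      (z, w) := by
  have hG := (hasFDerivAt_fst (𝕜 := ℝ) (p := (z, w))).add
    (((hasFDerivAt_fst (𝕜 := ℝ) (p := (z, w))).pow 2).mul (hasFDerivAt_snd (p := (z, w))))
  have hρ := (hasFDerivAt_snd (𝕜 := ℝ) (p := ((z, w) : ℂ × ℂ))).norm_sq
  refine (hG.prodMk hρ).congr_fderiv (ContinuousLinearMap.ext fun v => ?_)
  ext <;> simp <;> ring

lemma broughtonDeriv_surjective {z w : ℂ} (hw : w ≠ 0) (ha : 1 + 2 * z * w ≠ 0) :
    Function.Surjective (broughtonDeriv z w) := by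
  rintro ⟨u, t⟩
  have hw' : ‖w‖ ≠ 0 := norm_ne_zero_iff.2 hw
  set ω : ℂ := (t / (2 * ‖w‖ ^ 2)) • w
  have hω : 2 * inner ℝ w ω = t := by
    rw [real_inner_smul_right, real_inner_self_eq_norm_sq]
    field_simp
  refine ⟨((1 + 2 * z * w)⁻¹ * (u - z ^ 2 * ω), ω), ?_⟩
  rw [broughtonDeriv_apply, hω, mul_inv_cancel_left₀ ha, sub_add_cancel]

lemma rank_complex_prod_real : Module.rank ℝ (ℂ × ℝ) = 3 := by
  rw [rank_prod', Complex.rank_real_complex, Module.rank_self]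
  norm_num

lemma rank_broughtonDeriv_zero_le_two (z : ℂ) :
    LinearMap.rank (broughtonDeriv z 0).toLinearMap ≤ 2 := by
  set f := (broughtonDeriv z 0).toLinearMap
  have hfac : f = (LinearMap.inl ℝ ℂ ℝ).comp ((LinearMap.fst ℝ ℂ ℝ).comp f) := by
    ext v <;> simp [f]
  calc LinearMap.rank f
      ≤ LinearMap.rank ((LinearMap.fst ℝ ℂ ℝ).comp f) := by
        rw [hfac]; exact LinearMap.rank_comp_le_right _ _
    _ ≤ Module.rank ℝ ℂ := LinearMap.rank_le_range _
    _ = 2 := Complex.rank_real_complex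

lemma rank_broughtonDeriv_le_two_of_eq_zero {z w : ℂ} (ha : 1 + 2 * z * w = 0) :
    LinearMap.rank (broughtonDeriv z w).toLinearMap ≤ 2 := by
  set g := ((mul ℝ ℂ (z ^ 2)).prod (innerSL ℝ ((2 : ℝ) • w))).toLinearMap
  have hfac : (broughtonDeriv z w).toLinearMap = g.comp (LinearMap.snd ℝ ℂ ℂ) := by
    ext v <;> simp [g, ha]
    ring
  calc LinearMap.rank (broughtonDeriv z w).toLinearMap
      ≤ LinearMap.rank g := by
        rw [hfac]; exact LinearMap.rank_comp_le_left _ _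
    _ ≤ Module.rank ℝ ℂ := LinearMap.rank_le_domain _
    _ = 2 := Complex.rank_real_complex

lemma rank_broughtonDeriv_le_two_iff (z w : ℂ) :
    LinearMap.rank (broughtonDeriv z w).toLinearMap ≤ 2 ↔ w = 0 ∨ 1 + 2 * z * w = 0 := by
  refine ⟨fun h => ?_, ?_⟩
  · by_contra! hc
    rw [LinearMap.rank, rank_range_of_surjective _ (broughtonDeriv_surjective hc.1 hc.2),
      rank_complex_prod_real] at h
    norm_num at h
  · rintro (rfl | ha)
    · exact rank_broughtonDeriv_zero_le_two z
    · exact rank_broughtonDeriv_le_two_of_eq_zero ha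

/-- For Broughton's example `G(z, w) = z + z²w` on `ℂ²` and `ρ(z, w) = |w|²`,
the Milnor set `M_G = { (z, w) : rank_ℝ D(G, ρ)(z, w) ≤ 2 }` equals
`{ w = 0 } ∪ { 1 + 2zw = 0 }`. -/
theorem stmt7 :
    {p : ℂ × ℂ | LinearMap.rank
        (fderiv ℝ (fun q : ℂ × ℂ => (q.1 + q.1 ^ 2 * q.2, ‖q.2‖ ^ 2)) p).toLinearMap ≤ 2} =
      {p : ℂ × ℂ | p.2 = 0} ∪ {p : ℂ × ℂ | 1 + 2 * p.1 * p.2 = 0} := by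
  ext ⟨z, w⟩
  rw [Set.mem_ofPred_eq, (hasFDerivAt_broughton z w).fderiv]
  exact rank_broughtonDeriv_le_two_iff z w
end

section
/- Let G : ℂ² → ℂ be Broughton's example G(z, w) = z + z²w, let φ(z, w) = 1/(1 + |w|²), and let M₂ = { (z, w) ∈ ℂ² : 1 + 2zw = 0 }. Then the image of M₂ under the map (z, w) ↦ (G(z, w), φ(z, w)) ∈ ℂ × ℝ equals the punctured cone { (α, t) ∈ ℂ × ℝ : 0 < t < 1 and |α|² = t/(16(1 − t)) }. In particular, on M₂ one has G(z, w) = −1/(4w), and writing r = |w| the image point satisfies |α|² = 1/(16r²) and t = 1/(1 + r²), so the image is a 2-dimensional open cone whose closure adds the vertex 0 and which is asymptotic to the plane t = 1. -/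
/-!
On `M₂ = {1 + 2zw = 0}` we have `w ≠ 0` and `z = -1/(2w)`, hence `G = -1/(4w)`. So with
`u = |w|²` the image point is `(α, t)` with `|α|² = 1/(16u)` and `t = 1/(1 + u) ∈ (0, 1)`,
and eliminating `u = (1 - t)/t` gives the cone equation. Conversely `α ≠ 0` on the cone, and
`w = -1/(4α)`, `z = 2α` is a preimage.
-/

lemma div_sixteen_mul_one_sub_one_div_one_add {u : ℝ} (hu : 1 + u ≠ 0) :
    1 / (1 + u) / (16 * (1 - 1 / (1 + u))) = 1 / (16 * u) := by
  rw [one_sub_div hu, add_sub_cancel_left]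
  field_simp

lemma one_div_one_add_one_div_sixteen_mul_div {t : ℝ} (ht₀ : t ≠ 0) (ht₁ : t ≠ 1) :
    1 / (1 + 1 / (16 * (t / (16 * (1 - t))))) = t := by
  have : 1 - t ≠ 0 := sub_ne_zero.mpr ht₁.symm
  field_simp
  ring

section BroughtonM₂

variable {z w : ℂ}

lemma ne_zero_of_one_add_two_mul_mul_eq_zero (h : 1 + 2 * z * w = 0) : w ≠ 0 := by
  rintro rfl
  simp at h

lemma add_sq_mul_eq_of_one_add_two_mul_mul_eq_zero (h : 1 + 2 * z * w = 0) :
    z + z ^ 2 * w = -1 / (4 * w) := by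
  have hw := ne_zero_of_one_add_two_mul_mul_eq_zero h
  field_simp
  linear_combination (1 + 2 * z * w) * h

lemma mem_cone_of_one_add_two_mul_mul_eq_zero (h : 1 + 2 * z * w = 0) :
    0 < 1 / (1 + ‖w‖ ^ 2) ∧ 1 / (1 + ‖w‖ ^ 2) < 1 ∧
      ‖z + z ^ 2 * w‖ ^ 2 = 1 / (1 + ‖w‖ ^ 2) / (16 * (1 - 1 / (1 + ‖w‖ ^ 2))) := by
  have hw : 0 < ‖w‖ := norm_pos_iff.mpr (ne_zero_of_one_add_two_mul_mul_eq_zero h)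
  refine ⟨by positivity, by rw [div_lt_one (by positivity)]; nlinarith, ?_⟩
  rw [div_sixteen_mul_one_sub_one_div_one_add (by positivity),
    add_sq_mul_eq_of_one_add_two_mul_mul_eq_zero h]
  norm_num [mul_pow]

end BroughtonM₂

lemma exists_preimage_of_mem_cone {α : ℂ} {t : ℝ} (ht₀ : 0 < t) (ht₁ : t < 1)
    (hα : ‖α‖ ^ 2 = t / (16 * (1 - t))) :
    ∃ z w : ℂ, 1 + 2 * z * w = 0 ∧ z + z ^ 2 * w = α ∧ 1 / (1 + ‖w‖ ^ 2) = t := by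
  have hα₀ : α ≠ 0 := by
    rintro rfl
    have : 0 < t / (16 * (1 - t)) := div_pos ht₀ (by linarith)
    simp_all
  refine ⟨2 * α, -1 / (4 * α), by field_simp; ring, by field_simp; ring, ?_⟩
  rw [← one_div_one_add_one_div_sixteen_mul_div ht₀.ne' ht₁.ne, ← hα]
  norm_num [mul_pow]

/-- For Broughton's example `G(z, w) = z + z²w` and `φ(z, w) = 1/(1 + |w|²)`,
the image of `M₂ = {1 + 2zw = 0}` under `(G, φ)` is the punctured open cone
`{ (α, t) : 0 < t < 1, |α|² = t/(16(1 - t)) }`; in particular `G = -1/(4w)` on `M₂`. -/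
theorem stmt8 :
    ((fun p : ℂ × ℂ => (p.1 + p.1 ^ 2 * p.2, 1 / (1 + ‖p.2‖ ^ 2))) ''
        {p : ℂ × ℂ | 1 + 2 * p.1 * p.2 = 0}) =
      {q : ℂ × ℝ | 0 < q.2 ∧ q.2 < 1 ∧ ‖q.1‖ ^ 2 = q.2 / (16 * (1 - q.2))} ∧
    ∀ p : ℂ × ℂ, 1 + 2 * p.1 * p.2 = 0 →
      p.1 + p.1 ^ 2 * p.2 = -1 / (4 * p.2) := by
  refine ⟨?_, fun p h => add_sq_mul_eq_of_one_add_two_mul_mul_eq_zero h⟩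
  ext ⟨α, t⟩
  constructor
  · rintro ⟨⟨z, w⟩, h, hzw⟩
    obtain ⟨rfl, rfl⟩ := Prod.mk.inj hzw
    exact mem_cone_of_one_add_two_mul_mul_eq_zero h
  · rintro ⟨ht₀, ht₁, hα⟩
    obtain ⟨z, w, h, rfl, rfl⟩ := exists_preimage_of_mem_cone ht₀ ht₁ hα
    exact ⟨(z, w), h, rfl⟩
end

section
/- Let G : ℂ² → ℂ be Broughton's example G(z, w) = z + z²w and let M_G = M₁ ∪ M₂ with M₁ = { (z, w) : w = 0 } and M₂ = { (z, w) : 1 + 2zw = 0 }. Then the asymptotic set S_G := { α ∈ ℂ : there exists a sequence (z_k, w_k) in M_G with ‖(z_k, w_k)‖ → ∞ and G(z_k, w_k) → α } equals {0}. -/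
/-!
On `M₁ = {w = 0}` the map is `G(z, 0) = z` and on `M₂ = {zw = -1/2}` it is `G = z/2`. Hence along `M_G`
either `‖(z, w)‖ ≤ 2‖G‖`, or `‖w‖` dominates and `‖G‖ · ‖(z, w)‖ = ‖z‖‖w‖/2 = 1/4`. A bounded sequence
of values along points escaping to infinity is therefore eventually in the second case, so it tends
to `0`; conversely the curve `w ↦ (-(2w)⁻¹, w)` in `M₂` realises the value `0` as `w → ∞`.
-/

open Filter Topology Bornology

namespace Broughton

def G (p : ℂ × ℂ) : ℂ := p.1 + p.1 ^ 2 * p.2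

def milnorSet : Set (ℂ × ℂ) := {p | p.2 = 0} ∪ {p | 1 + 2 * p.1 * p.2 = 0}

lemma norm_le_two_mul_norm_G_or_norm_G_mul_norm_eq {p : ℂ × ℂ} (hp : p ∈ milnorSet) :
    ‖p‖ ≤ 2 * ‖G p‖ ∨ ‖G p‖ * ‖p‖ = 1 / 4 := by
  obtain ⟨z, w⟩ := p
  rw [Prod.norm_def]
  rcases hp with (hw : w = 0) | (hzw : 1 + 2 * z * w = 0)
  · left
    subst hw
    simp only [G, mul_zero, add_zero, norm_zero, max_eq_left (norm_nonneg z)]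
    linarith [norm_nonneg z]
  · have hG : G (z, w) = z / 2 := by
      simp only [G]
      linear_combination (z / 2) * hzw
    have hnorm_mul : ‖z‖ * ‖w‖ = 1 / 2 := by
      rw [← norm_mul, show z * w = -(1 / 2) by linear_combination hzw / 2]
      norm_num
    rw [hG, norm_div, Complex.norm_two]
    rcases le_total ‖w‖ ‖z‖ with h | h
    · left
      rw [max_eq_left h]
      linarith
    · right
      rw [max_eq_right h]
      linarith

lemma tendsto_G_nhds_zero {ι : Type*} {l : Filter ι} {x : ι → ℂ × ℂ}
    (hx : ∀ k, x k ∈ milnorSet) (hnorm : Tendsto (fun k => ‖x k‖) l atTop)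
    (hbdd : IsBoundedUnder (· ≤ ·) l fun k => ‖G (x k)‖) :
    Tendsto (fun k => G (x k)) l (𝓝 0) := by
  obtain ⟨C, hC⟩ := hbdd
  have h_eq : ∀ᶠ k in l, (4 * ‖x k‖)⁻¹ = ‖G (x k)‖ := by
    filter_upwards [hC, hnorm.eventually_gt_atTop (2 * C)] with k hGk hxk
    rcases norm_le_two_mul_norm_G_or_norm_G_mul_norm_eq (hx k) with h | h
    · linarith [show ‖G (x k)‖ ≤ C from hGk]
    · have hxk_ne : ‖x k‖ ≠ 0 := by
        rintro h0
        norm_num [h0] at h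
      field_simp
      linarith
  rw [tendsto_zero_iff_norm_tendsto_zero]
  exact (tendsto_inv_atTop_zero.comp (hnorm.const_mul_atTop four_pos)).congr' h_eq

noncomputable def milnorCurve (w : ℂ) : ℂ × ℂ := (-(2 * w)⁻¹, w)

lemma milnorCurve_mem_milnorSet {w : ℂ} (hw : w ≠ 0) : milnorCurve w ∈ milnorSet := by
  right
  change 1 + 2 * -(2 * w)⁻¹ * w = 0
  field_simp
  ring

lemma G_milnorCurve {w : ℂ} (hw : w ≠ 0) : G (milnorCurve w) = -(4 * w)⁻¹ := by
  simp only [G, milnorCurve]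
  field_simp
  ring

lemma tendsto_norm_milnorCurve {ι : Type*} {l : Filter ι} {w : ι → ℂ}
    (hw : Tendsto w l (cobounded ℂ)) : Tendsto (fun k => ‖milnorCurve (w k)‖) l atTop :=
  tendsto_atTop_mono (fun k => norm_snd_le (milnorCurve (w k)))
    (tendsto_norm_cobounded_atTop.comp hw)

lemma tendsto_G_milnorCurve {ι : Type*} {l : Filter ι} {w : ι → ℂ}
    (hw : Tendsto w l (cobounded ℂ)) (hw₀ : ∀ k, w k ≠ 0) :
    Tendsto (fun k => G (milnorCurve (w k))) l (𝓝 0) := by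
  simp only [G_milnorCurve (hw₀ _)]
  simpa using ((tendsto_inv₀_cobounded.comp hw).mul_const 4⁻¹).neg

end Broughton

open Broughton in
/-- For Broughton's example `G(z, w) = z + z²w` with Milnor set
`M_G = M₁ ∪ M₂`, `M₁ = {w = 0}`, `M₂ = {1 + 2zw = 0}`, the asymptotic set
`S_G = { α : ∃ (x_k) ⊆ M_G, ‖x_k‖ → ∞, G(x_k) → α }` equals `{0}`. -/
theorem stmt9 :
    {α : ℂ | ∃ x : ℕ → ℂ × ℂ,
      (∀ k, x k ∈ ({p : ℂ × ℂ | p.2 = 0} ∪ {p : ℂ × ℂ | 1 + 2 * p.1 * p.2 = 0})) ∧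
      Filter.Tendsto (fun k => ‖x k‖) Filter.atTop Filter.atTop ∧
      Filter.Tendsto (fun k => (x k).1 + (x k).1 ^ 2 * (x k).2) Filter.atTop (nhds α)} =
    {0} := by
  ext α
  constructor
  · rintro ⟨x, hx, hnorm, hlim⟩
    exact tendsto_nhds_unique hlim
      (tendsto_G_nhds_zero hx hnorm hlim.norm.isBoundedUnder_le)
  · rintro rfl
    have hw : Tendsto (fun k : ℕ => ((k + 1 : ℕ) : ℂ)) atTop (cobounded ℂ) :=
      tendsto_natCast_atTop_cobounded.comp (tendsto_add_atTop_nat 1)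
    have hw₀ (k : ℕ) : ((k + 1 : ℕ) : ℂ) ≠ 0 := Nat.cast_ne_zero.mpr k.succ_ne_zero
    exact ⟨fun k => milnorCurve ((k + 1 : ℕ) : ℂ), fun k => milnorCurve_mem_milnorSet (hw₀ k),
      tendsto_norm_milnorCurve hw, tendsto_G_milnorCurve hw hw₀⟩
end

section
/- Let G : ℂ³ → ℂ² be the polynomial mapping G(z, w, ζ) = (z, zζ² + w), regarded as a real polynomial map ℂ³ ≅ ℝ⁶ → ℝ⁴, and let ρ : ℂ³ → ℝ, ρ(z, w, ζ) = |ζ|². Then the Milnor set M_G := { (z, w, ζ) ∈ ℂ³ : the real Fréchet derivative at (z, w, ζ) of the map (G, ρ) : ℂ³ → ℂ² × ℝ has rank ≤ 4 over ℝ } equals { (z, w, ζ) ∈ ℂ³ : ζ = 0 }. -/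
/-! At `p = (z, w, ζ)` the real derivative of `(G, ρ)` is
`v ↦ (v₁, ζ² v₁ + 2 z ζ v₃ + v₂, 2 ⟪ζ, v₃⟫)`. For `ζ ≠ 0` it is onto `ℂ² × ℝ ≅ ℝ⁵`: take `v₃` a real
multiple of `ζ` to hit the last coordinate, then solve for `v₂`. For `ζ = 0` the last coordinate
vanishes, so the derivative factors through `ℂ² ≅ ℝ⁴`. -/

open scoped RealInnerProductSpace

universe v

theorem LinearMap.rank_le_of_forall_snd_eq_zero {R V : Type*} {M N : Type v} [Ring R]
    [AddCommGroup V] [Module R V] [AddCommGroup M] [Module R M] [AddCommGroup N] [Module R N]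
    (f : V →ₗ[R] M × N) (hf : ∀ v, (f v).2 = 0) : f.rank ≤ Module.rank R M := by
  have hfac : f = (LinearMap.inl R M N).comp ((LinearMap.fst R M N).comp f) := by
    ext v <;> simp [hf]
  rw [hfac]
  exact (LinearMap.rank_comp_le_right _ _).trans (LinearMap.rank_le_range _)

noncomputable def milnorMap (q : ℂ × ℂ × ℂ) : (ℂ × ℂ) × ℝ :=
  ((q.1, q.1 * q.2.2 ^ 2 + q.2.1), ‖q.2.2‖ ^ 2)

theorem fderiv_milnorMap_apply (p v : ℂ × ℂ × ℂ) :
    fderiv ℝ milnorMap p v =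
      ((v.1, p.2.2 ^ 2 * v.1 + 2 * p.1 * p.2.2 * v.2.2 + v.2.1), 2 * ⟪p.2.2, v.2.2⟫) := by
  have hv₃ : HasFDerivAt (fun q : ℂ × ℂ × ℂ => q.2.2) _ p := (hasFDerivAt_snd (𝕜 := ℝ)).snd
  have hF : HasFDerivAt milnorMap _ p :=
    ((hasFDerivAt_fst (𝕜 := ℝ)).prodMk
      (((hasFDerivAt_fst (𝕜 := ℝ)).mul (hv₃.pow 2)).add (hasFDerivAt_snd (𝕜 := ℝ)).fst)).prodMk
      hv₃.norm_sq
  rw [hF.fderiv]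
  simp only [ContinuousLinearMap.prod_apply, add_apply, smul_apply, ContinuousLinearMap.comp_apply,
    ContinuousLinearMap.coe_fst', ContinuousLinearMap.coe_snd', coe_innerSL_apply, smul_eq_mul,
    nsmul_eq_mul, Nat.cast_ofNat, Nat.add_one_sub_one, pow_one]
  congr 2
  ring

theorem fderiv_milnorMap_surjective {p : ℂ × ℂ × ℂ} (hζ : p.2.2 ≠ 0) :
    Function.Surjective (fderiv ℝ milnorMap p) := by
  rintro ⟨⟨a, b⟩, c⟩
  set u : ℂ := (c / (2 * ‖p.2.2‖ ^ 2)) • p.2.2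
  refine ⟨(a, b - p.2.2 ^ 2 * a - 2 * p.1 * p.2.2 * u, u), ?_⟩
  have hinner : 2 * ⟪p.2.2, u⟫ = c := by
    rw [real_inner_smul_right, real_inner_self_eq_norm_sq]
    field_simp
  simp only [fderiv_milnorMap_apply, hinner, Prod.mk.injEq, and_true, true_and]
  ring

theorem fderiv_milnorMap_snd_eq_zero {p : ℂ × ℂ × ℂ} (hζ : p.2.2 = 0) (v : ℂ × ℂ × ℂ) :
    (fderiv ℝ milnorMap p v).2 = 0 := by
  simp [fderiv_milnorMap_apply, hζ]

/-- For `G(z, w, ζ) = (z, zζ² + w) : ℂ³ → ℂ²` and `ρ(z, w, ζ) = |ζ|²`, the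
Milnor set `M_G = { (z, w, ζ) : rank_ℝ D(G, ρ)(z, w, ζ) ≤ 4 }` equals `{ ζ = 0 }`. -/
theorem stmt10 :
    {p : ℂ × ℂ × ℂ | LinearMap.rank
        (fderiv ℝ (fun q : ℂ × ℂ × ℂ =>
          ((q.1, q.1 * q.2.2 ^ 2 + q.2.1), ‖q.2.2‖ ^ 2)) p).toLinearMap ≤ 4} =
      {p : ℂ × ℂ × ℂ | p.2.2 = 0} := by
  ext p
  change (fderiv ℝ milnorMap p : (ℂ × ℂ × ℂ) →ₗ[ℝ] (ℂ × ℂ) × ℝ).rank ≤ 4 ↔ p.2.2 = 0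
  by_cases hζ : p.2.2 = 0
  · simp only [hζ, iff_true]
    calc _ ≤ Module.rank ℝ (ℂ × ℂ) :=
          LinearMap.rank_le_of_forall_snd_eq_zero _ (fderiv_milnorMap_snd_eq_zero hζ)
      _ = 4 := by rw [rank_prod', Complex.rank_real_complex]; norm_num
  · rw [LinearMap.rank, rank_range_of_surjective _ (fderiv_milnorMap_surjective hζ), rank_prod',
      rank_prod', Complex.rank_real_complex, Module.rank_self]
    norm_num [hζ]
end

section
/- Let G : ℂ³ → ℂ² be the polynomial mapping G(z, w, ζ) = (z, zζ² + w) and let ρ(z, w, ζ) = |ζ|². Then the asymptotic set S_G := { α ∈ ℂ² : there exists a sequence (x_k) in ℂ³ with the real Fréchet derivative of (G, ρ) at x_k of rank ≤ 4 over ℝ, ‖x_k‖ → ∞, and G(x_k) → α } is empty. -/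
/-!
Where `ζ ≠ 0` the derivative of `(G, ρ)` maps onto `ℂ² × ℝ ≅ ℝ⁵`: the `z`- and `w`-directions
already cover `ℂ²`, and `ρ` has the nonzero derivative `2 ⟪ζ, ·⟫`. So the Milnor set lies in
`{ζ = 0}`, where `‖G (z, w, 0)‖ = ‖(z, w, 0)‖` for the sup norms: along it `G` goes to infinity
together with the point, and has no finite asymptotic value.
-/

open ContinuousLinearMap

namespace MilnorExample

def G (q : ℂ × ℂ × ℂ) : ℂ × ℂ := (q.1, q.1 * q.2.2 ^ 2 + q.2.1)

noncomputable def ρ (q : ℂ × ℂ × ℂ) : ℝ := ‖q.2.2‖ ^ 2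

theorem fderiv_G_ρ_apply (q v : ℂ × ℂ × ℂ) :
    fderiv ℝ (fun q => (G q, ρ q)) q v =
      ((v.1, q.1 * (2 * q.2.2 * v.2.2) + q.2.2 ^ 2 * v.1 + v.2.1), 2 * inner ℝ q.2.2 v.2.2) := by
  have hzw : HasFDerivAt (fun q : ℂ × ℂ × ℂ => q.2) (snd ℝ ℂ (ℂ × ℂ)) q := hasFDerivAt_snd
  have hz : HasFDerivAt (fun q : ℂ × ℂ × ℂ => q.1) (fst ℝ ℂ (ℂ × ℂ)) q := hasFDerivAt_fst
  have hζ := hzw.snd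
  have h : HasFDerivAt (fun q => (G q, ρ q)) _ q :=
    (hz.prodMk ((hz.mul (hζ.pow 2)).add hzw.fst)).prodMk hζ.norm_sq
  rw [h.fderiv]
  simp only [prod_apply, coe_fst', add_apply, smul_apply, comp_apply, coe_snd',
    smul_eq_mul, coe_innerSL_apply]
  norm_num only [nsmul_eq_mul, pow_one]

theorem fderiv_G_ρ_surjective {q : ℂ × ℂ × ℂ} (hζ : q.2.2 ≠ 0) :
    Function.Surjective (fderiv ℝ (fun q => (G q, ρ q)) q) := by
  rintro ⟨⟨a, b⟩, r⟩
  obtain ⟨z, w, ζ⟩ := q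
  set v : ℂ := (r / (2 * ‖ζ‖ ^ 2)) • ζ
  have hv : 2 * inner ℝ ζ v = r := by
    have : ‖ζ‖ ≠ 0 := norm_ne_zero_iff.mpr hζ
    rw [real_inner_smul_right, real_inner_self_eq_norm_sq]
    field_simp
  refine ⟨(a, b - (z * (2 * ζ * v) + ζ ^ 2 * a), v), ?_⟩
  rw [fderiv_G_ρ_apply]
  simp only [hv]
  ring_nf

theorem rank_fderiv_G_ρ {q : ℂ × ℂ × ℂ} (hζ : q.2.2 ≠ 0) :
    (fderiv ℝ (fun q => (G q, ρ q)) q).toLinearMap.rank = 5 := by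
  rw [LinearMap.rank, LinearMap.range_eq_top.mpr (fderiv_G_ρ_surjective hζ), rank_top,
    rank_prod', rank_prod', Complex.rank_real_complex, Module.rank_self]
  norm_num

theorem norm_G_of_snd_snd_eq_zero {q : ℂ × ℂ × ℂ} (hζ : q.2.2 = 0) : ‖G q‖ = ‖q‖ := by
  simp [G, Prod.norm_def, hζ]

theorem snd_snd_eq_zero_of_rank_fderiv_le_four {q : ℂ × ℂ × ℂ}
    (h : (fderiv ℝ (fun q => (G q, ρ q)) q).toLinearMap.rank ≤ 4) : q.2.2 = 0 := by
  by_contra hζ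
  rw [rank_fderiv_G_ρ hζ] at h
  norm_num at h

end MilnorExample

open MilnorExample

/-- For `G(z, w, ζ) = (z, zζ² + w) : ℂ³ → ℂ²` and `ρ(z, w, ζ) = |ζ|²`, the
asymptotic set `S_G = { α : ∃ (x_k) in the Milnor set Sing(G, ρ) with ‖x_k‖ → ∞ and
G(x_k) → α }` is empty. -/
theorem stmt11 :
    {α : ℂ × ℂ | ∃ x : ℕ → ℂ × ℂ × ℂ,
      (∀ k, LinearMap.rank (fderiv ℝ (fun q : ℂ × ℂ × ℂ =>
        ((q.1, q.1 * q.2.2 ^ 2 + q.2.1), ‖q.2.2‖ ^ 2)) (x k)).toLinearMap ≤ 4) ∧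
      Filter.Tendsto (fun k => ‖x k‖) Filter.atTop Filter.atTop ∧
      Filter.Tendsto (fun k => ((x k).1, (x k).1 * (x k).2.2 ^ 2 + (x k).2.1))
        Filter.atTop (nhds α)} = ∅ := by
  refine Set.eq_empty_of_forall_notMem fun α ⟨x, hrank, hnorm, hG⟩ => ?_
  have hζ (k : ℕ) : (x k).2.2 = 0 := snd_snd_eq_zero_of_rank_fderiv_le_four (hrank k)
  have hGnorm : Filter.Tendsto (fun k => ‖G (x k)‖) Filter.atTop Filter.atTop :=
    hnorm.congr fun k => (norm_G_of_snd_snd_eq_zero (hζ k)).symm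
  exact not_tendsto_atTop_of_tendsto_nhds hG.norm hGnorm
end

section
/- Let G : ℂ³ → ℂ² be the polynomial mapping G(z, w, ζ) = (z, zζ² + w) and let ρ(z, w, ζ) = |w|². Then the asymptotic set S_G := { α ∈ ℂ² : there exists a sequence (x_k) in ℂ³ with the real Fréchet derivative of (G, ρ) at x_k of rank ≤ 4 over ℝ, ‖x_k‖ → ∞, and G(x_k) → α } is nonempty; in fact (0, 1) ∈ S_G, as witnessed by the sequence x_k = (1/k², 0, k). -/
/-!
On the hyperplane `w = 0` the differential of `ρ = |w|²` vanishes, so there the real differential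
of `(G, ρ)` has the rank of `DG`, which is at most `dim_ℝ ℂ² = 4`. The points `(1/k², 0, k)` lie on
this hyperplane, leave every compact set, and are mapped by `G` to `(1/k², 1) → (0, 1)`.
-/

open Filter Topology

section RankBound

universe u

variable {𝕜 E : Type*} {F G : Type u} [NontriviallyNormedField 𝕜]
  [NormedAddCommGroup E] [NormedSpace 𝕜 E] [NormedAddCommGroup F] [NormedSpace 𝕜 F]
  [NormedAddCommGroup G] [NormedSpace 𝕜 G]

theorem rank_fderiv_prodMk_le_of_hasFDerivAt_zero {f : E → F} {g : E → G} {x : E}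
    (hf : DifferentiableAt 𝕜 f x) (hg : HasFDerivAt g (0 : E →L[𝕜] G) x) :
    LinearMap.rank (fderiv 𝕜 (fun y => (f y, g y)) x).toLinearMap ≤ Module.rank 𝕜 F := by
  rw [(hf.hasFDerivAt.prodMk hg).fderiv]
  calc LinearMap.rank ((fderiv 𝕜 f x).prod 0).toLinearMap
      = LinearMap.rank (LinearMap.inl 𝕜 F G ∘ₗ (fderiv 𝕜 f x).toLinearMap) := rfl
    _ ≤ LinearMap.rank (fderiv 𝕜 f x).toLinearMap := LinearMap.rank_comp_le_right _ _
    _ ≤ Module.rank 𝕜 F := LinearMap.rank_le_range _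

end RankBound

theorem HasFDerivAt.norm_sq_of_apply_eq_zero {E F : Type*} [NormedAddCommGroup E]
    [NormedSpace ℝ E] [NormedAddCommGroup F] [InnerProductSpace ℝ F] {f : E → F}
    {f' : E →L[ℝ] F} {x : E} (hf : HasFDerivAt f f' x) (h0 : f x = 0) :
    HasFDerivAt (fun y => ‖f y‖ ^ 2) (0 : E →L[ℝ] ℝ) x := by
  simpa [h0] using hf.norm_sq

theorem tendsto_norm_atTop_of_tendsto_norm_snd {α E F : Type*} [SeminormedAddCommGroup E]
    [SeminormedAddCommGroup F] {l : Filter α} {x : α → E × F}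
    (h : Tendsto (fun k => ‖(x k).2‖) l atTop) : Tendsto (fun k => ‖x k‖) l atTop :=
  tendsto_atTop_mono (fun k => norm_snd_le (x k)) h

theorem rank_fderiv_le_four_of_snd_fst_eq_zero {p : ℂ × ℂ × ℂ} (hp : p.2.1 = 0) :
    LinearMap.rank (fderiv ℝ (fun q : ℂ × ℂ × ℂ =>
      ((q.1, q.1 * q.2.2 ^ 2 + q.2.1), ‖q.2.1‖ ^ 2)) p).toLinearMap ≤ 4 := by
  have hG : DifferentiableAt ℝ (fun q : ℂ × ℂ × ℂ => (q.1, q.1 * q.2.2 ^ 2 + q.2.1)) p := by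
    fun_prop
  have hρ := (hasFDerivAt_snd.fst (𝕜 := ℝ) (x := p)).norm_sq_of_apply_eq_zero hp
  calc _ ≤ Module.rank ℝ (ℂ × ℂ) := rank_fderiv_prodMk_le_of_hasFDerivAt_zero hG hρ
    _ = 4 := by rw [rank_prod', Complex.rank_real_complex]; norm_num

theorem tendsto_norm_witness_atTop :
    Tendsto (fun k : ℕ => ‖(((k : ℂ) ^ 2)⁻¹, (0 : ℂ), (k : ℂ))‖) atTop atTop := by
  refine tendsto_norm_atTop_of_tendsto_norm_snd (tendsto_norm_atTop_of_tendsto_norm_snd ?_)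
  simpa using tendsto_natCast_atTop_atTop (R := ℝ)

theorem tendsto_witness_image :
    Tendsto (fun k : ℕ => (((k : ℂ) ^ 2)⁻¹, ((k : ℂ) ^ 2)⁻¹ * (k : ℂ) ^ 2 + 0))
      atTop (𝓝 (0, 1)) := by
  have hz : Tendsto (fun k : ℕ => ((k : ℂ) ^ 2)⁻¹) atTop (𝓝 0) := by
    simpa [inv_pow] using (tendsto_inv_atTop_nhds_zero_nat (𝕜 := ℂ)).pow 2
  have hw : (fun _ : ℕ => (1 : ℂ)) =ᶠ[atTop] fun k => ((k : ℂ) ^ 2)⁻¹ * (k : ℂ) ^ 2 + 0 := by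
    filter_upwards [eventually_ne_atTop 0] with k hk
    simp [hk]
  exact hz.prodMk_nhds (tendsto_const_nhds.congr' hw)

/-- For `G(z, w, ζ) = (z, zζ² + w) : ℂ³ → ℂ²` and `ρ(z, w, ζ) = |w|²`, the
asymptotic set `S_G = { α : ∃ (x_k) in Sing(G, ρ) with ‖x_k‖ → ∞ and G(x_k) → α }` is
nonempty; in fact `(0, 1) ∈ S_G`, as witnessed by the sequence `x_k = (1/k², 0, k)`. -/
theorem stmt12 :
    (∀ k : ℕ, LinearMap.rank (fderiv ℝ (fun q : ℂ × ℂ × ℂ =>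
        ((q.1, q.1 * q.2.2 ^ 2 + q.2.1), ‖q.2.1‖ ^ 2))
        ((((k : ℂ)) ^ 2)⁻¹, (0 : ℂ), (k : ℂ))).toLinearMap ≤ 4) ∧
    Filter.Tendsto (fun k : ℕ => ‖(((((k : ℂ)) ^ 2)⁻¹, (0 : ℂ), (k : ℂ)) : ℂ × ℂ × ℂ)‖)
      Filter.atTop Filter.atTop ∧
    Filter.Tendsto (fun k : ℕ =>
        (((((k : ℂ)) ^ 2)⁻¹ : ℂ), ((((k : ℂ)) ^ 2)⁻¹ * ((k : ℂ)) ^ 2 + 0 : ℂ)))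
      Filter.atTop (nhds (((0 : ℂ), (1 : ℂ)) : ℂ × ℂ)) ∧
    ((0 : ℂ), (1 : ℂ)) ∈ {α : ℂ × ℂ | ∃ x : ℕ → ℂ × ℂ × ℂ,
      (∀ k, LinearMap.rank (fderiv ℝ (fun q : ℂ × ℂ × ℂ =>
        ((q.1, q.1 * q.2.2 ^ 2 + q.2.1), ‖q.2.1‖ ^ 2)) (x k)).toLinearMap ≤ 4) ∧
      Filter.Tendsto (fun k => ‖x k‖) Filter.atTop Filter.atTop ∧
      Filter.Tendsto (fun k => ((x k).1, (x k).1 * (x k).2.2 ^ 2 + (x k).2.1))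
        Filter.atTop (nhds α)} ∧
    {α : ℂ × ℂ | ∃ x : ℕ → ℂ × ℂ × ℂ,
      (∀ k, LinearMap.rank (fderiv ℝ (fun q : ℂ × ℂ × ℂ =>
        ((q.1, q.1 * q.2.2 ^ 2 + q.2.1), ‖q.2.1‖ ^ 2)) (x k)).toLinearMap ≤ 4) ∧
      Filter.Tendsto (fun k => ‖x k‖) Filter.atTop Filter.atTop ∧
      Filter.Tendsto (fun k => ((x k).1, (x k).1 * (x k).2.2 ^ 2 + (x k).2.1))
        Filter.atTop (nhds α)}.Nonempty := by
  have hrank (k : ℕ) := rank_fderiv_le_four_of_snd_fst_eq_zero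
    (p := (((k : ℂ) ^ 2)⁻¹, (0 : ℂ), (k : ℂ))) rfl
  have hmem : ((0 : ℂ), (1 : ℂ)) ∈ {α : ℂ × ℂ | ∃ x : ℕ → ℂ × ℂ × ℂ,
      (∀ k, LinearMap.rank (fderiv ℝ (fun q : ℂ × ℂ × ℂ =>
        ((q.1, q.1 * q.2.2 ^ 2 + q.2.1), ‖q.2.1‖ ^ 2)) (x k)).toLinearMap ≤ 4) ∧
      Filter.Tendsto (fun k => ‖x k‖) Filter.atTop Filter.atTop ∧
      Filter.Tendsto (fun k => ((x k).1, (x k).1 * (x k).2.2 ^ 2 + (x k).2.1))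
        Filter.atTop (nhds α)} :=
    ⟨_, hrank, tendsto_norm_witness_atTop, tendsto_witness_image⟩
  exact ⟨hrank, tendsto_norm_witness_atTop, tendsto_witness_image, hmem, _, hmem⟩
end
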